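/- arXiv:2001.04179 — 2 statements merged into one kernel-verified Lean document; each statement's English description precedes it below -/
import Mathlib

section
/- Let A be a nonzero real m×n matrix of rank r, let α > 0, and define δ = max_{1≤i≤r} |1 − α σ_i(A)²/‖A‖_F²|, where σ_i(A) are the nonzero singular values of A. Then for every vector u in the row space ran(Aᵀ) and every natural number k, ‖(I − α AᵀA/‖A‖_F²)^k u‖₂ ≤ δ^k ‖u‖₂. -/
open Matrix

/-- The squared Frobenius norm of a real matrix. -/
noncomputable def frobSq {ι κ : Type*} [Fintype ι] [Fintype κ] (A : Matrix ι κ ℝ) : ℝ :=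
  ∑ i, ∑ j, (A i j) ^ 2

/-!
The matrix `1 - c • AᵀA` is diagonal in an orthonormal eigenbasis `vᵢ` of `AᵀA`, with entries
`1 - c μᵢ`, so by Parseval it suffices to bound `|1 - c μᵢ|ᵏ` on the coordinates `⟪vᵢ, u⟫` that do
not vanish. A vector in `ran Aᵀ = (ker AᵀA)ᗮ` is orthogonal to every `vᵢ` with `μᵢ = 0`, so only the
nonzero eigenvalues `μᵢ = σᵢ(A)²` enter, and for those `|1 - c μᵢ| ≤ δ`.
-/

open scoped InnerProductSpace

namespace OrthonormalBasis

variable {ι 𝕜 E : Type*} [Fintype ι] [RCLike 𝕜] [NormedAddCommGroup E] [InnerProductSpace 𝕜 E]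
  (b : OrthonormalBasis ι 𝕜 E) {T : E →ₗ[𝕜] E} {t : ι → 𝕜}

theorem inner_apply_of_apply_eq_smul (hT : ∀ i, T (b i) = t i • b i) (x : E) (i : ι) :
    ⟪b i, T x⟫_𝕜 = t i * ⟪b i, x⟫_𝕜 := by
  conv_lhs => rw [← b.sum_repr' x]
  simp only [map_sum, map_smul, hT, smul_smul]
  rw [b.orthonormal.inner_right_fintype, mul_comm]

theorem norm_apply_le_of_apply_eq_smul (hT : ∀ i, T (b i) = t i • b i) {x : E} {C : ℝ}
    (hC : 0 ≤ C) (ht : ∀ i, ⟪b i, x⟫_𝕜 ≠ 0 → ‖t i‖ ≤ C) : ‖T x‖ ≤ C * ‖x‖ := by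
  have hcoeff : ∀ i, ‖⟪b i, T x⟫_𝕜‖ ^ 2 ≤ C ^ 2 * ‖⟪b i, x⟫_𝕜‖ ^ 2 := by
    intro i
    rw [b.inner_apply_of_apply_eq_smul hT, norm_mul, mul_pow]
    by_cases hi : ⟪b i, x⟫_𝕜 = 0
    · simp [hi]
    · gcongr
      exact ht i hi
  have hsq : ‖T x‖ ^ 2 ≤ (C * ‖x‖) ^ 2 := by
    rw [mul_pow, ← b.sum_sq_norm_inner_right (T x), ← b.sum_sq_norm_inner_right x, Finset.mul_sum]
    exact Finset.sum_le_sum fun i _ => hcoeff i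
  exact (pow_le_pow_iff_left₀ (norm_nonneg _) (by positivity) two_ne_zero).mp hsq

end OrthonormalBasis

namespace Matrix

variable {m n 𝕜 : Type*} [Fintype m] [Fintype n] [DecidableEq m] [DecidableEq n] [RCLike 𝕜]

theorem range_toEuclideanLin_conjTranspose (A : Matrix m n 𝕜) :
    LinearMap.range (toEuclideanLin Aᴴ) = (LinearMap.ker (toEuclideanLin (Aᴴ * A)))ᗮ := by
  rw [toEuclideanLin_conjTranspose_eq_adjoint, ← LinearMap.orthogonal_ker, toLpLin_mul_same,
    toEuclideanLin_conjTranspose_eq_adjoint, LinearMap.ker_adjoint_comp_self]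

theorem IsHermitian.toEuclideanLin_eigenvectorBasis {H : Matrix n n 𝕜} (hH : H.IsHermitian)
    (i : n) : toEuclideanLin H (hH.eigenvectorBasis i) =
      hH.eigenvalues i • hH.eigenvectorBasis i := by
  rw [toLpLin_apply, hH.mulVec_eigenvectorBasis, WithLp.toLp_smul, WithLp.toLp_ofLp]

theorem IsHermitian.toEuclideanLin_one_sub_smul_pow_eigenvectorBasis {H : Matrix n n 𝕜}
    (hH : H.IsHermitian) (c : 𝕜) (k : ℕ) (i : n) :
    toEuclideanLin ((1 - c • H) ^ k) (hH.eigenvectorBasis i) =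
      (1 - c * hH.eigenvalues i) ^ k • hH.eigenvectorBasis i := by
  have hv : Module.End.HasEigenvector (toEuclideanLin (1 - c • H)) (1 - c * hH.eigenvalues i)
      (hH.eigenvectorBasis i) := by
    refine ⟨Module.End.mem_eigenspace_iff.mpr ?_, hH.eigenvectorBasis.orthonormal.ne_zero i⟩
    rw [map_sub, map_smul, toLpLin_one, LinearMap.sub_apply, LinearMap.smul_apply,
      hH.toEuclideanLin_eigenvectorBasis, RCLike.real_smul_eq_coe_smul (K := 𝕜),
      LinearMap.id_apply, smul_smul, sub_smul, one_smul]
  rw [toLpLin_pow, hv.pow_apply]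

end Matrix

theorem stmt0_general {m n : ℕ} (A : Matrix (Fin m) (Fin n) ℝ)
    (α : ℝ)
    (hH : (Aᵀ * A).IsHermitian) (δ : ℝ)
    (hδ : IsGreatest {x : ℝ | ∃ i, hH.eigenvalues i ≠ 0 ∧
      x = |1 - α * hH.eigenvalues i / frobSq A|} δ)
    (u : EuclideanSpace ℝ (Fin n))
    (hu : u ∈ LinearMap.range (Matrix.toEuclideanLin Aᵀ)) (k : ℕ) :
    ‖Matrix.toEuclideanLin ((1 - (α / frobSq A) • (Aᵀ * A)) ^ k) u‖ ≤ δ ^ k * ‖u‖ := by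
  set c := α / frobSq A
  have hδ_nonneg : 0 ≤ δ := by
    obtain ⟨i, -, hi⟩ := hδ.1
    exact hi ▸ abs_nonneg _
  have hu_perp : u ∈ (LinearMap.ker (toEuclideanLin (Aᵀ * A)))ᗮ := by
    have hrange := A.range_toEuclideanLin_conjTranspose
    rw [conjTranspose_eq_transpose_of_trivial] at hrange
    rwa [← hrange]
  refine hH.eigenvectorBasis.norm_apply_le_of_apply_eq_smul
    (t := fun i => (1 - c * hH.eigenvalues i) ^ k)
    (hH.toEuclideanLin_one_sub_smul_pow_eigenvectorBasis c k) (pow_nonneg hδ_nonneg k)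
    fun i hi => ?_
  have hμ : hH.eigenvalues i ≠ 0 := by
    refine fun h0 => hi (Submodule.inner_right_of_mem_orthogonal ?_ hu_perp)
    rw [LinearMap.mem_ker, hH.toEuclideanLin_eigenvectorBasis, h0, zero_smul]
  have hcontraction : |1 - c * hH.eigenvalues i| ≤ δ := by
    simpa only [c, mul_div_right_comm] using hδ.2 ⟨i, hμ, rfl⟩
  simpa only [norm_pow, Real.norm_eq_abs] using pow_le_pow_left₀ (abs_nonneg _) hcontraction k

theorem stmt0 {m n : ℕ} (A : Matrix (Fin m) (Fin n) ℝ) (hA : A ≠ 0)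
    (α : ℝ) (hα : 0 < α)
    (hH : (Aᵀ * A).IsHermitian) (δ : ℝ)
    (hδ : IsGreatest {x : ℝ | ∃ i, hH.eigenvalues i ≠ 0 ∧
      x = |1 - α * hH.eigenvalues i / frobSq A|} δ)
    (u : EuclideanSpace ℝ (Fin n))
    (hu : u ∈ LinearMap.range (Matrix.toEuclideanLin Aᵀ)) (k : ℕ) :
    ‖Matrix.toEuclideanLin ((1 - (α / frobSq A) • (Aᵀ * A)) ^ k) u‖ ≤ δ ^ k * ‖u‖ :=
  stmt0_general A α hH δ hδ u hu k
end

section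
/- Let A be a nonzero real m×n matrix with column partition {J_1,…,J_t}, b ∈ ℝ^m, b_⊥ = (I − AA†)b, α > 0, and β^J = max_j ‖A_{:,J_j}‖₂²/‖A_{:,J_j}‖_F². Suppose z^{k−1} − b_⊥ ∈ ran(A) and z^k = z^{k−1} − (α/‖A_{:,J_j}‖_F²) A_{:,J_j}(A_{:,J_j})ᵀ z^{k−1}, where j is sampled with probability ‖A_{:,J_j}‖_F²/‖A‖_F². If 0 < α < 2/β^J, then E‖z^k − b_⊥‖₂² ≤ ρ ‖z^{k−1} − b_⊥‖₂² with ρ = 1 − (2α − α²β^J)σ_r(A)²/‖A‖_F², where σ_r(A) is the smallest nonzero singular value of A. -/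
/-!
With `w = z - b_⊥ ∈ ran A`: since `Aᵀ b_⊥ = 0`, subtracting `b_⊥` commutes with the block step,
so the new error is `w - (α / ‖A_J‖_F²) A_J A_Jᵀ w`. Expanding the square and using
`‖A_J A_Jᵀ w‖² ≤ ‖A_J‖₂² ‖A_Jᵀ w‖² ≤ β^J ‖A_J‖_F² ‖A_Jᵀ w‖²` bounds its squared norm by
`‖w‖² - (2α - α²β^J) ‖A_Jᵀ w‖² / ‖A_J‖_F²`. Averaging with weights `‖A_J‖_F² / ‖A‖_F²` turns the
block terms into `‖Aᵀ w‖²`, and for `w = A v` the functional-calculus inequality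
`(AᵀA)² ⪰ σ_r² AᵀA` gives `‖Aᵀ w‖² ≥ σ_r² ‖w‖²`.
-/

open Matrix

/-- The spectral (ℓ₂ operator) norm of a real matrix. -/
noncomputable def specNorm {ι κ : Type*} [Fintype ι] [Fintype κ] [DecidableEq κ]
    (A : Matrix ι κ ℝ) : ℝ :=
  ‖LinearMap.toContinuousLinearMap (Matrix.toEuclideanLin A)‖

/-- The squared Euclidean norm of a vector. -/
noncomputable def norm2Sq {ι : Type*} [Fintype ι] (v : ι → ℝ) : ℝ := ∑ i, (v i) ^ 2

/-- `P` is the Moore–Penrose pseudoinverse of `A`. -/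
def IsMoorePenrose {m n : ℕ} (A : Matrix (Fin m) (Fin n) ℝ)
    (P : Matrix (Fin n) (Fin m) ℝ) : Prop :=
  A * P * A = A ∧ P * A * P = P ∧ (A * P)ᵀ = A * P ∧ (P * A)ᵀ = P * A

/-- The column submatrix of `A` indexed by the finite set `J`. -/
def colSub {m n : ℕ} (A : Matrix (Fin m) (Fin n) ℝ) (J : Finset (Fin n)) :
    Matrix (Fin m) J ℝ :=
  A.submatrix id (fun j => (j : Fin n))

open scoped MatrixOrder ComplexOrder

theorem Matrix.PosSemidef.posSemidef_mul_self_sub_smul {𝕜 n : Type*} [RCLike 𝕜] [Fintype n]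
    [DecidableEq n] {S : Matrix n n 𝕜} (hS : S.PosSemidef) {c : ℝ}
    (hc : ∀ i, hS.1.eigenvalues i ≠ 0 → c ≤ hS.1.eigenvalues i) :
    (S * S - c • S).PosSemidef := by
  have : IsSelfAdjoint S := hS.1
  rw [← Matrix.nonneg_iff_posSemidef, ← cfc_id' ℝ S, ← cfc_mul .., ← cfc_smul .., ← cfc_sub ..]
  refine cfc_nonneg fun x hx => ?_
  rw [hS.1.spectrum_real_eq_range_eigenvalues] at hx
  obtain ⟨i, rfl⟩ := hx
  by_cases h0 : hS.1.eigenvalues i = 0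
  · simp [h0]
  · have := hS.eigenvalues_nonneg i
    simp only [smul_eq_mul]
    nlinarith [hc i h0]

section Norms

variable {ι κ : Type*} [Fintype ι] [Fintype κ]

theorem norm2Sq_eq_dotProduct (v : ι → ℝ) : norm2Sq v = v ⬝ᵥ v := by
  simp [norm2Sq, dotProduct, sq]

theorem norm2Sq_nonneg (v : ι → ℝ) : 0 ≤ norm2Sq v :=
  Finset.sum_nonneg fun _ _ => sq_nonneg _

theorem norm2Sq_sub_smul (a b : ι → ℝ) (c : ℝ) :
    norm2Sq (a - c • b) = norm2Sq a - 2 * c * (a ⬝ᵥ b) + c ^ 2 * norm2Sq b := by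
  simp only [norm2Sq_eq_dotProduct, sub_dotProduct, dotProduct_sub, smul_dotProduct,
    dotProduct_smul, dotProduct_comm b a, smul_eq_mul]
  ring

theorem norm_toLp_sq (v : ι → ℝ) : ‖WithLp.toLp 2 v‖ ^ 2 = norm2Sq v :=
  EuclideanSpace.real_norm_sq_eq _

theorem frobSq_pos {M : Matrix ι κ ℝ} (hM : M ≠ 0) : 0 < frobSq M := by
  obtain ⟨i, k, hik⟩ : ∃ i k, M i k ≠ 0 := by
    by_contra! h
    exact hM (Matrix.ext h)
  calc 0 < M i k ^ 2 := by positivity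
    _ ≤ ∑ k', M i k' ^ 2 :=
      Finset.single_le_sum (f := fun k' => M i k' ^ 2) (fun _ _ => sq_nonneg _)
        (Finset.mem_univ k)
    _ ≤ frobSq M :=
      Finset.single_le_sum (f := fun i => ∑ k', M i k' ^ 2)
        (fun _ _ => Finset.sum_nonneg fun _ _ => sq_nonneg _) (Finset.mem_univ i)

theorem norm2Sq_mulVec_le [DecidableEq κ] (M : Matrix ι κ ℝ) (u : κ → ℝ) :
    norm2Sq (M *ᵥ u) ≤ specNorm M ^ 2 * norm2Sq u := by
  rw [← norm_toLp_sq, ← norm_toLp_sq, ← mul_pow]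
  exact pow_le_pow_left₀ (norm_nonneg _)
    ((LinearMap.toContinuousLinearMap (Matrix.toEuclideanLin M)).le_opNorm _) 2

theorem mul_norm2Sq_mulVec_le_of_eigenvalues (A : Matrix ι κ ℝ) [DecidableEq κ]
    (hH : (Aᵀ * A).IsHermitian) {c : ℝ} (hc : ∀ i, hH.eigenvalues i ≠ 0 → c ≤ hH.eigenvalues i)
    (v : κ → ℝ) : c * norm2Sq (A *ᵥ v) ≤ norm2Sq (Aᵀ *ᵥ (A *ᵥ v)) := by
  have hpsd : (Aᵀ * A).PosSemidef := by
    simpa [conjTranspose_eq_transpose_of_trivial] using posSemidef_conjTranspose_mul_self A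
  have := (hpsd.posSemidef_mul_self_sub_smul hc).dotProduct_mulVec_nonneg v
  simp only [star_trivial, sub_mulVec, smul_mulVec, dotProduct_sub, dotProduct_smul,
    ← mulVec_mulVec, dotProduct_mulVec v Aᵀ, vecMul_transpose] at this
  rw [dotProduct_mulVec (A *ᵥ v) A, ← mulVec_transpose, smul_eq_mul] at this
  rw [norm2Sq_eq_dotProduct, norm2Sq_eq_dotProduct]
  linarith

end Norms

noncomputable def blockStep {ι κ : Type*} [Fintype ι] [Fintype κ] (M : Matrix ι κ ℝ) (α : ℝ)
    (z : ι → ℝ) : ι → ℝ :=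
  z - (α / frobSq M) • ((M * Mᵀ) *ᵥ z)

section BlockStep

variable {ι κ : Type*} [Fintype ι] [Fintype κ]

theorem blockStep_sub {M : Matrix ι κ ℝ} {y : ι → ℝ} (hy : Mᵀ *ᵥ y = 0) (α : ℝ) (z : ι → ℝ) :
    blockStep M α z - y = blockStep M α (z - y) := by
  have hMy : (M * Mᵀ) *ᵥ y = 0 := by rw [← mulVec_mulVec, hy, mulVec_zero]
  simp only [blockStep, mulVec_sub, hMy, sub_zero]
  abel

theorem norm2Sq_blockStep_le [DecidableEq κ] {M : Matrix ι κ ℝ} (hM : M ≠ 0) {β : ℝ}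
    (hβ : specNorm M ^ 2 ≤ β * frobSq M) (α : ℝ) (w : ι → ℝ) :
    norm2Sq (blockStep M α w) ≤
      norm2Sq w - (2 * α - α ^ 2 * β) / frobSq M * norm2Sq (Mᵀ *ᵥ w) := by
  have hF := frobSq_pos hM
  have hdot : w ⬝ᵥ (M * Mᵀ) *ᵥ w = norm2Sq (Mᵀ *ᵥ w) := by
    rw [← mulVec_mulVec, dotProduct_mulVec, ← mulVec_transpose, norm2Sq_eq_dotProduct]
  have hle : norm2Sq ((M * Mᵀ) *ᵥ w) ≤ β * frobSq M * norm2Sq (Mᵀ *ᵥ w) := by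
    rw [← mulVec_mulVec]
    exact (norm2Sq_mulVec_le M _).trans
      (mul_le_mul_of_nonneg_right hβ (norm2Sq_nonneg _))
  rw [blockStep, norm2Sq_sub_smul, hdot]
  have := mul_le_mul_of_nonneg_left hle (sq_nonneg (α / frobSq M))
  have hcancel : (α / frobSq M) ^ 2 * (β * frobSq M * norm2Sq (Mᵀ *ᵥ w)) =
      α ^ 2 * β / frobSq M * norm2Sq (Mᵀ *ᵥ w) := by
    field_simp
  rw [hcancel] at this
  have hsplit : (2 * α - α ^ 2 * β) / frobSq M * norm2Sq (Mᵀ *ᵥ w) =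
      2 * (α / frobSq M) * norm2Sq (Mᵀ *ᵥ w) - α ^ 2 * β / frobSq M * norm2Sq (Mᵀ *ᵥ w) := by
    ring
  linarith

end BlockStep

theorem sum_sum_eq_sum_of_partition {τ ι β : Type*} [Fintype τ] [Fintype ι] [DecidableEq ι]
    [AddCommMonoid β] {B : τ → Finset ι} (hdisj : ∀ i j, i ≠ j → Disjoint (B i) (B j))
    (hcover : ∀ l, ∃ j, l ∈ B j) (g : ι → β) : ∑ j, ∑ k ∈ B j, g k = ∑ k, g k := by
  rw [← Finset.sum_biUnion fun i _ j _ hij => hdisj i j hij]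
  congr
  exact Finset.eq_univ_of_forall fun l => Finset.mem_biUnion.mpr
    (let ⟨j, hj⟩ := hcover l; ⟨j, Finset.mem_univ j, hj⟩)

section ColumnBlocks

variable {m n : ℕ} (A : Matrix (Fin m) (Fin n) ℝ)

theorem frobSq_colSub (J : Finset (Fin n)) : frobSq (colSub A J) = ∑ k ∈ J, ∑ i, A i k ^ 2 := by
  rw [frobSq, Finset.sum_comm, ← Finset.sum_coe_sort J]
  rfl

theorem norm2Sq_colSub_transpose_mulVec (J : Finset (Fin n)) (x : Fin m → ℝ) :
    norm2Sq ((colSub A J)ᵀ *ᵥ x) = ∑ k ∈ J, (Aᵀ *ᵥ x) k ^ 2 := by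
  rw [← Finset.sum_coe_sort J]
  rfl

theorem colSub_transpose_mulVec_eq_zero {x : Fin m → ℝ} (hx : Aᵀ *ᵥ x = 0) (J : Finset (Fin n)) :
    (colSub A J)ᵀ *ᵥ x = 0 :=
  funext fun k => congrFun hx k

variable {τ : Type*} [Fintype τ] {B : τ → Finset (Fin n)}
  (hdisj : ∀ i j, i ≠ j → Disjoint (B i) (B j)) (hcover : ∀ l, ∃ j, l ∈ B j)
include hdisj hcover

theorem sum_frobSq_colSub : ∑ j, frobSq (colSub A (B j)) = frobSq A := by
  simp only [frobSq_colSub]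
  rw [sum_sum_eq_sum_of_partition hdisj hcover, frobSq, Finset.sum_comm]

theorem sum_norm2Sq_colSub_transpose_mulVec (x : Fin m → ℝ) :
    ∑ j, norm2Sq ((colSub A (B j))ᵀ *ᵥ x) = norm2Sq (Aᵀ *ᵥ x) := by
  simp only [norm2Sq_colSub_transpose_mulVec]
  exact sum_sum_eq_sum_of_partition hdisj hcover _

theorem sum_mul_norm2Sq_blockStep_le (hA : A ≠ 0) (hne : ∀ j, colSub A (B j) ≠ 0) {β : ℝ}
    (hβ : ∀ j, specNorm (colSub A (B j)) ^ 2 ≤ β * frobSq (colSub A (B j))) (α : ℝ)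
    (w : Fin m → ℝ) :
    ∑ j, frobSq (colSub A (B j)) / frobSq A * norm2Sq (blockStep (colSub A (B j)) α w) ≤
      norm2Sq w - (2 * α - α ^ 2 * β) / frobSq A * norm2Sq (Aᵀ *ᵥ w) := by
  have hF := frobSq_pos hA
  calc _ ≤ ∑ j, frobSq (colSub A (B j)) / frobSq A * (norm2Sq w -
          (2 * α - α ^ 2 * β) / frobSq (colSub A (B j)) * norm2Sq ((colSub A (B j))ᵀ *ᵥ w)) :=
        Finset.sum_le_sum fun j _ => mul_le_mul_of_nonneg_left
          (norm2Sq_blockStep_le (hne j) (hβ j) α w) (div_nonneg (frobSq_pos (hne j)).le hF.le)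
    _ = ∑ j, (frobSq (colSub A (B j)) / frobSq A * norm2Sq w -
          (2 * α - α ^ 2 * β) / frobSq A * norm2Sq ((colSub A (B j))ᵀ *ᵥ w)) :=
        Finset.sum_congr rfl fun j _ => by field_simp [(frobSq_pos (hne j)).ne']
    _ = _ := by
      rw [Finset.sum_sub_distrib, ← Finset.sum_mul, ← Finset.sum_div, ← Finset.mul_sum,
        sum_frobSq_colSub A hdisj hcover, sum_norm2Sq_colSub_transpose_mulVec A hdisj hcover,
        div_self hF.ne', one_mul]

end ColumnBlocks

theorem IsMoorePenrose.transpose_mul_sub_mul_eq_zero {m n : ℕ} {A : Matrix (Fin m) (Fin n) ℝ}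
    {P : Matrix (Fin n) (Fin m) ℝ} (hP : IsMoorePenrose A P) : Aᵀ * (1 - A * P) = 0 := by
  have h := congrArg transpose hP.1
  rw [transpose_mul, hP.2.2.1] at h
  rw [Matrix.mul_sub, Matrix.mul_one, h, sub_self]

theorem stmt11_general {m n t : ℕ} (A : Matrix (Fin m) (Fin n) ℝ) (hA : A ≠ 0)
    (hH : (Aᵀ * A).IsHermitian) (σr : ℝ)
    (hleast : IsLeast {x : ℝ | ∃ i, hH.eigenvalues i ≠ 0 ∧ x = hH.eigenvalues i} (σr ^ 2))
    (P : Matrix (Fin n) (Fin m) ℝ) (hP : IsMoorePenrose A P) (b : Fin m → ℝ)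
    (B : Fin t → Finset (Fin n))
    (hdisj : ∀ i j, i ≠ j → Disjoint (B i) (B j))
    (hcover : ∀ l : Fin n, ∃ j, l ∈ B j)
    (hne : ∀ j, colSub A (B j) ≠ 0)
    (βJ : ℝ)
    (hβ : IsGreatest
      {x : ℝ | ∃ j, x = specNorm (colSub A (B j)) ^ 2 / frobSq (colSub A (B j))} βJ)
    (α : ℝ) (hα1 : 0 < α) (hα2 : α < 2 / βJ)
    (z : Fin m → ℝ)
    (hz : ∃ v : Fin n → ℝ, z - (1 - A * P).mulVec b = A.mulVec v) :
    ∑ j, (frobSq (colSub A (B j)) / frobSq A) *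
        norm2Sq (z - (α / frobSq (colSub A (B j))) •
            ((colSub A (B j)) * (colSub A (B j))ᵀ).mulVec z - (1 - A * P).mulVec b)
      ≤ (1 - (2 * α - α ^ 2 * βJ) * σr ^ 2 / frobSq A) *
          norm2Sq (z - (1 - A * P).mulVec b) := by
  obtain ⟨v, hv⟩ := hz
  set bPerp := (1 - A * P) *ᵥ b
  have hAbPerp : Aᵀ *ᵥ bPerp = 0 := by
    rw [mulVec_mulVec, hP.transpose_mul_sub_mul_eq_zero, zero_mulVec]
  have hβJ : ∀ j, specNorm (colSub A (B j)) ^ 2 ≤ βJ * frobSq (colSub A (B j)) :=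
    fun j => (div_le_iff₀ (frobSq_pos (hne j))).mp (hβ.2 ⟨j, rfl⟩)
  have hβJ_pos : 0 < βJ := by
    by_contra! h
    linarith [div_nonpos_of_nonneg_of_nonpos zero_le_two h]
  have hrate : 0 ≤ (2 * α - α ^ 2 * βJ) / frobSq A := by
    have := (lt_div_iff₀ hβJ_pos).mp hα2
    exact div_nonneg (by nlinarith) (frobSq_pos hA).le
  have heig : σr ^ 2 * norm2Sq (z - bPerp) ≤ norm2Sq (Aᵀ *ᵥ (z - bPerp)) :=
    hv ▸ mul_norm2Sq_mulVec_le_of_eigenvalues A hH (fun i hi => hleast.2 ⟨i, hi, rfl⟩) v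
  calc _ = ∑ j, frobSq (colSub A (B j)) / frobSq A *
        norm2Sq (blockStep (colSub A (B j)) α (z - bPerp)) :=
        Finset.sum_congr rfl fun j _ => by
          rw [← blockStep_sub (colSub_transpose_mulVec_eq_zero A hAbPerp _)]
          rfl
    _ ≤ norm2Sq (z - bPerp) - (2 * α - α ^ 2 * βJ) / frobSq A * norm2Sq (Aᵀ *ᵥ (z - bPerp)) :=
        sum_mul_norm2Sq_blockStep_le A hdisj hcover hA hne hβJ α _
    _ ≤ norm2Sq (z - bPerp) - (2 * α - α ^ 2 * βJ) / frobSq A * (σr ^ 2 * norm2Sq (z - bPerp)) :=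
        sub_le_sub_left (mul_le_mul_of_nonneg_left heig hrate) _
    _ = _ := by ring

theorem stmt11 {m n t : ℕ} (A : Matrix (Fin m) (Fin n) ℝ) (hA : A ≠ 0)
    (hH : (Aᵀ * A).IsHermitian) (σr : ℝ) (hσr : 0 < σr)
    (hleast : IsLeast {x : ℝ | ∃ i, hH.eigenvalues i ≠ 0 ∧ x = hH.eigenvalues i} (σr ^ 2))
    (P : Matrix (Fin n) (Fin m) ℝ) (hP : IsMoorePenrose A P) (b : Fin m → ℝ)
    (B : Fin t → Finset (Fin n))
    (hdisj : ∀ i j, i ≠ j → Disjoint (B i) (B j))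
    (hcover : ∀ l : Fin n, ∃ j, l ∈ B j)
    (hne : ∀ j, colSub A (B j) ≠ 0)
    (βJ : ℝ)
    (hβ : IsGreatest
      {x : ℝ | ∃ j, x = specNorm (colSub A (B j)) ^ 2 / frobSq (colSub A (B j))} βJ)
    (α : ℝ) (hα1 : 0 < α) (hα2 : α < 2 / βJ)
    (z : Fin m → ℝ)
    (hz : ∃ v : Fin n → ℝ, z - (1 - A * P).mulVec b = A.mulVec v) :
    ∑ j, (frobSq (colSub A (B j)) / frobSq A) *
        norm2Sq (z - (α / frobSq (colSub A (B j))) •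
            ((colSub A (B j)) * (colSub A (B j))ᵀ).mulVec z - (1 - A * P).mulVec b)
      ≤ (1 - (2 * α - α ^ 2 * βJ) * σr ^ 2 / frobSq A) *
          norm2Sq (z - (1 - A * P).mulVec b) :=
  stmt11_general A hA hH σr hleast P hP b B hdisj hcover hne βJ hβ α hα1 hα2 z hz
end
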